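/- Let I be an SMI instance in which every stable matching matches every man and every woman, let a be a positive integer, let I_T be the truncated instance of I at rank a, and suppose M is a stable matching of I with d_U(M) ≤ a. Then for every stable matching N of I_T that is woman-optimal in I_T (for every stable matching M' of I_T and every woman w matched in M', rank(w, N(w)) ≤ rank(w, M'(w))) and matches every woman, we have d_W(N) ≤ d_W(M). -/

import Mathlib

/-!
Since `d_U(M) ≤ a`, every pair of `M` survives the truncation, and `M` stays stable in `I_T`:
truncating only deletes pairs and keeps the relative order of the remaining entries of every
list, so a blocking pair of `M` in `I_T` would already block `M` in `I`. Woman-optimality of `N`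
in `I_T`, compared with `M`, then gives every woman a partner in `N` whom she ranks no lower than
her partner in `M` (she has one, since stable matchings of `I` are perfect), and this comparison
reads the same in `I` as in `I_T`.
-/

/-- An instance of the Stable Marriage problem with Incomplete lists (SMI):
men `U` and women `W`, each agent ranking a subset of the other side
in strict order of preference (represented as a duplicate-free list,
most-preferred first). -/
structure SMI (U W : Type) where
  mpref : U → List W
  wpref : W → List U
  mpref_nodup : ∀ m, (mpref m).Nodup
  wpref_nodup : ∀ w, (wpref w).Nodup

namespace SMI

variable {U W : Type}

/-- The (1-based) rank of woman `w` on man `m`'s preference list. -/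
def mrank [DecidableEq W] (I : SMI U W) (m : U) (w : W) : ℕ :=
  (I.mpref m).idxOf w + 1

/-- The (1-based) rank of man `m` on woman `w`'s preference list. -/
def wrank [DecidableEq U] (I : SMI U W) (w : W) (m : U) : ℕ :=
  (I.wpref w).idxOf m + 1

/-- `(m, w)` is an acceptable pair if each appears on the other's list. -/
def Acceptable (I : SMI U W) (m : U) (w : W) : Prop :=
  w ∈ I.mpref m ∧ m ∈ I.wpref w

/-- A matching: a set of acceptable pairs in which every man and every
woman appears at most once. -/
def IsMatching (I : SMI U W) (M : Set (U × W)) : Prop :=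
  (∀ p ∈ M, I.Acceptable p.1 p.2) ∧
  (∀ p ∈ M, ∀ q ∈ M, p.1 = q.1 → p = q) ∧
  (∀ p ∈ M, ∀ q ∈ M, p.2 = q.2 → p = q)

/-- Man `m` is matched in `M`. -/
def MMatched (M : Set (U × W)) (m : U) : Prop := ∃ w, (m, w) ∈ M

/-- Woman `w` is matched in `M`. -/
def WMatched (M : Set (U × W)) (w : W) : Prop := ∃ m, (m, w) ∈ M

/-- `M` matches every man and every woman. -/
def Perfect (M : Set (U × W)) : Prop :=
  (∀ m : U, MMatched M m) ∧ (∀ w : W, WMatched M w)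

/-- `(m, w)` is a blocking pair of `M`. -/
def Blocks [DecidableEq U] [DecidableEq W] (I : SMI U W) (M : Set (U × W))
    (m : U) (w : W) : Prop :=
  I.Acceptable m w ∧
  (¬ MMatched M m ∨ ∃ w', (m, w') ∈ M ∧ I.mrank m w < I.mrank m w') ∧
  (¬ WMatched M w ∨ ∃ m', (m', w) ∈ M ∧ I.wrank w m < I.wrank w m')

/-- A stable matching: a matching admitting no blocking pair. -/
def IsStable [DecidableEq U] [DecidableEq W] (I : SMI U W) (M : Set (U × W)) : Prop :=
  I.IsMatching M ∧ ∀ m w, ¬ I.Blocks M m w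

/-- The man-degree `d_U(M)`: the largest rank of any man in `M`. -/
noncomputable def dU [DecidableEq W] (I : SMI U W) (M : Set (U × W)) : ℕ :=
  sSup {r : ℕ | ∃ p ∈ M, r = I.mrank p.1 p.2}

/-- The woman-degree `d_W(M)`: the largest rank of any woman in `M`. -/
noncomputable def dW [DecidableEq U] (I : SMI U W) (M : Set (U × W)) : ℕ :=
  sSup {r : ℕ | ∃ p ∈ M, r = I.wrank p.2 p.1}

/-- The regret-equality score `r(M) = |d_U(M) - d_W(M)|`. -/
noncomputable def rScore [DecidableEq U] [DecidableEq W] (I : SMI U W) (M : Set (U × W)) : ℕ :=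
  ((I.dU M : ℤ) - (I.dW M : ℤ)).natAbs

/-- `M0` is a man-optimal and woman-pessimal stable matching of `I`. -/
def ManOptWomanPess [DecidableEq U] [DecidableEq W] (I : SMI U W)
    (M0 : Set (U × W)) : Prop :=
  I.IsStable M0 ∧ ∀ M, I.IsStable M →
    (∀ m w0 w, (m, w0) ∈ M0 → (m, w) ∈ M → I.mrank m w0 ≤ I.mrank m w) ∧
    (∀ w m0 m, (m0, w) ∈ M0 → (m, w) ∈ M → I.wrank w m ≤ I.wrank w m0)

/-- `Mz` is a woman-optimal and man-pessimal stable matching of `I`. -/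
def WomanOptManPess [DecidableEq U] [DecidableEq W] (I : SMI U W)
    (Mz : Set (U × W)) : Prop :=
  I.IsStable Mz ∧ ∀ M, I.IsStable M →
    (∀ w mz m, (mz, w) ∈ Mz → (m, w) ∈ M → I.wrank w mz ≤ I.wrank w m) ∧
    (∀ m wz w, (m, wz) ∈ Mz → (m, w) ∈ M → I.mrank m w ≤ I.mrank m wz)

/-- The truncated instance `I_T` of `I` at rank `a`: every pair `(m, w)` with
`rank(m, w) > a` is deleted, i.e. each man's list is cut after his `a`-th
choice, and he is removed from the lists of the women thereby deleted. -/
def truncate [DecidableEq W] (I : SMI U W) (a : ℕ) : SMI U W where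
  mpref m := (I.mpref m).take a
  wpref w := (I.wpref w).filter (fun m => decide (w ∈ (I.mpref m).take a))
  mpref_nodup m := ((I.mpref m).take_sublist a).nodup (I.mpref_nodup m)
  wpref_nodup w := (I.wpref_nodup w).filter _

end SMI

namespace List

variable {α : Type*} [DecidableEq α] {l₁ l₂ : List α} {x y : α}

theorem Sublist.idxOf_lt_idxOf_of_nodup (h : l₁ <+ l₂) (hnd : l₂.Nodup) (hx : x ∈ l₁)
    (hy : y ∈ l₁) (hlt : l₁.idxOf x < l₁.idxOf y) : l₂.idxOf x < l₂.idxOf y := by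
  induction h with
  | slnil => simp at hx
  | cons a h ih =>
    have := h.subset hx
    have := h.subset hy
    grind [nodup_cons]
  | cons_cons a h ih => grind [nodup_cons]

theorem Sublist.idxOf_lt_idxOf_iff_of_nodup (h : l₁ <+ l₂) (hnd : l₂.Nodup) (hx : x ∈ l₁)
    (hy : y ∈ l₁) : l₁.idxOf x < l₁.idxOf y ↔ l₂.idxOf x < l₂.idxOf y := by
  refine ⟨h.idxOf_lt_idxOf_of_nodup hnd hx hy, fun hlt => ?_⟩
  rcases lt_trichotomy (l₁.idxOf x) (l₁.idxOf y) with hxy | hxy | hyx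
  · exact hxy
  · rw [idxOf_inj hx] at hxy
    subst hxy
    exact absurd hlt (lt_irrefl _)
  · exact absurd (h.idxOf_lt_idxOf_of_nodup hnd hy hx hyx) hlt.not_gt

theorem Sublist.idxOf_le_idxOf_iff_of_nodup (h : l₁ <+ l₂) (hnd : l₂.Nodup) (hx : x ∈ l₁)
    (hy : y ∈ l₁) : l₁.idxOf x ≤ l₁.idxOf y ↔ l₂.idxOf x ≤ l₂.idxOf y := by
  simpa only [not_lt] using (h.idxOf_lt_idxOf_iff_of_nodup hnd hy hx).not

end List

namespace SMI

variable {U W : Type} (I : SMI U W)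

theorem IsMatching.finite [Finite W] {M : Set (U × W)} (hM : I.IsMatching M) : M.Finite :=
  Set.Finite.of_finite_image (Set.toFinite _) fun _ hp _ hq => hM.2.2 _ hp _ hq

theorem mrank_le_dU [DecidableEq W] {M : Set (U × W)} (hM : M.Finite) {p : U × W} (hp : p ∈ M) :
    I.mrank p.1 p.2 ≤ I.dU M :=
  le_csSup ((hM.image _).subset <| by rintro _ ⟨q, hq, rfl⟩; exact ⟨q, hq, rfl⟩).bddAbove
    ⟨p, hp, rfl⟩

theorem wrank_le_dW [DecidableEq U] {M : Set (U × W)} (hM : M.Finite) {p : U × W} (hp : p ∈ M) :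
    I.wrank p.2 p.1 ≤ I.dW M :=
  le_csSup ((hM.image _).subset <| by rintro _ ⟨q, hq, rfl⟩; exact ⟨q, hq, rfl⟩).bddAbove
    ⟨p, hp, rfl⟩

section truncate

variable [DecidableEq W] (a : ℕ) {m m' : U} {w : W}

theorem truncate_wpref_sublist : ((I.truncate a).wpref w).Sublist (I.wpref w) :=
  List.filter_sublist

theorem truncate_acceptable_iff :
    (I.truncate a).Acceptable m w ↔ I.Acceptable m w ∧ I.mrank m w ≤ a := by
  have hw : w ∈ (I.mpref m).take a ↔ w ∈ I.mpref m ∧ (I.mpref m).idxOf w < a := by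
    refine ⟨fun h => ?_, fun h => (List.mem_take_iff_idxOf_lt h.1).2 h.2⟩
    have hmem := List.mem_of_mem_take h
    exact ⟨hmem, (List.mem_take_iff_idxOf_lt hmem).1 h⟩
  simp only [Acceptable, truncate, List.mem_filter, decide_eq_true_eq, hw, mrank,
    Nat.add_one_le_iff]
  tauto

theorem mrank_truncate (h : (I.truncate a).Acceptable m w) :
    (I.truncate a).mrank m w = I.mrank m w := by
  simp only [mrank, truncate]
  rw [(I.mpref m).take_prefix a |>.idxOf_eq_of_mem h.1]

theorem wrank_truncate_lt_iff [DecidableEq U] (h : (I.truncate a).Acceptable m w)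
    (h' : (I.truncate a).Acceptable m' w) :
    (I.truncate a).wrank w m < (I.truncate a).wrank w m' ↔ I.wrank w m < I.wrank w m' := by
  simpa only [wrank, add_lt_add_iff_right] using
    (I.truncate_wpref_sublist a).idxOf_lt_idxOf_iff_of_nodup (I.wpref_nodup w) h.2 h'.2

theorem wrank_truncate_le_iff [DecidableEq U] (h : (I.truncate a).Acceptable m w)
    (h' : (I.truncate a).Acceptable m' w) :
    (I.truncate a).wrank w m ≤ (I.truncate a).wrank w m' ↔ I.wrank w m ≤ I.wrank w m' := by
  simpa only [wrank, add_le_add_iff_right] using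
    (I.truncate_wpref_sublist a).idxOf_le_idxOf_iff_of_nodup (I.wpref_nodup w) h.2 h'.2

theorem Blocks.of_truncate [DecidableEq U] {M : Set (U × W)}
    (hM : ∀ p ∈ M, (I.truncate a).Acceptable p.1 p.2) (h : (I.truncate a).Blocks M m w) :
    I.Blocks M m w := by
  obtain ⟨hacc, hm, hw⟩ := h
  refine ⟨((I.truncate_acceptable_iff a).1 hacc).1, ?_, ?_⟩
  · refine hm.imp_right fun ⟨w', hw', hlt⟩ => ⟨w', hw', ?_⟩
    rwa [← I.mrank_truncate a hacc, ← I.mrank_truncate a (hM _ hw')]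
  · refine hw.imp_right fun ⟨m', hm', hlt⟩ => ⟨m', hm', ?_⟩
    exact (I.wrank_truncate_lt_iff a hacc (hM _ hm')).1 hlt

theorem IsStable.truncate [DecidableEq U] {M : Set (U × W)} (hM : I.IsStable M)
    (hdU : ∀ p ∈ M, I.mrank p.1 p.2 ≤ a) : (I.truncate a).IsStable M := by
  have hacc : ∀ p ∈ M, (I.truncate a).Acceptable p.1 p.2 := fun p hp =>
    (I.truncate_acceptable_iff a).2 ⟨hM.1.1 p hp, hdU p hp⟩
  exact ⟨⟨hacc, hM.1.2⟩, fun m w h => hM.2 m w (Blocks.of_truncate I a hacc h)⟩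

end truncate

end SMI

theorem stmt_12_general {U W : Type} [Fintype W] [DecidableEq U] [DecidableEq W]
    (I : SMI U W)
    (hperf : ∀ M : Set (U × W), I.IsStable M → SMI.Perfect M)
    (a : ℕ)
    (M : Set (U × W)) (hM : I.IsStable M) (hdU : I.dU M ≤ a)
    (N : Set (U × W)) (hN : (I.truncate a).IsStable N)
    (hNopt : ∀ M' : Set (U × W), (I.truncate a).IsStable M' →
      ∀ (w : W) (m m' : U), (m, w) ∈ N → (m', w) ∈ M' →
        (I.truncate a).wrank w m ≤ (I.truncate a).wrank w m') :
    I.dW N ≤ I.dW M := by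
  have hMfin := hM.1.finite
  have hMT : (I.truncate a).IsStable M :=
    hM.truncate I a fun p hp => (I.mrank_le_dU hMfin hp).trans hdU
  refine csSup_le' ?_
  rintro _ ⟨⟨m, w⟩, hmw, rfl⟩
  obtain ⟨m', hm'w⟩ := (hperf M hM).2 w
  calc I.wrank w m ≤ I.wrank w m' :=
        (I.wrank_truncate_le_iff a (hN.1.1 (m, w) hmw) (hMT.1.1 (m', w) hm'w)).1
          (hNopt M hMT w m m' hmw hm'w)
    _ ≤ I.dW M := I.wrank_le_dW hMfin hm'w

/-- If `M` is a stable matching of `I` with `d_U(M) ≤ a`, then any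
woman-optimal stable matching `N` of the truncated instance `I_T` matching
every woman satisfies `d_W(N) ≤ d_W(M)`. -/
theorem stmt_12 {U W : Type} [Fintype U] [Fintype W] [DecidableEq U] [DecidableEq W]
    (I : SMI U W)
    (hperf : ∀ M : Set (U × W), I.IsStable M → SMI.Perfect M)
    (a : ℕ) (ha : 0 < a)
    (M : Set (U × W)) (hM : I.IsStable M) (hdU : I.dU M ≤ a)
    (N : Set (U × W)) (hN : (I.truncate a).IsStable N)
    (hNopt : ∀ M' : Set (U × W), (I.truncate a).IsStable M' →
      ∀ (w : W) (m m' : U), (m, w) ∈ N → (m', w) ∈ M' →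
        (I.truncate a).wrank w m ≤ (I.truncate a).wrank w m')
    (hNw : ∀ w : W, SMI.WMatched N w) :
    I.dW N ≤ I.dW M :=
  stmt_12_general I hperf a M hM hdU N hN hNopt
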